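/- Let A ∈ B(H) and φ an Orlicz function. Then φ(w(A)²) ≤ (1/4)·‖φ(|A|²) + φ(|A*|²)‖ + (1/2)·φ(w(|A|·|A*|)). -/

import Mathlib

/-- An Orlicz function: convex, continuous, non-decreasing on `[0, ∞)`,
vanishing at `0`, positive on `(0, ∞)`, and tending to infinity. -/
def IsOrliczFunction (φ : ℝ → ℝ) : Prop :=
  ConvexOn ℝ (Set.Ici 0) φ ∧ ContinuousOn φ (Set.Ici 0) ∧ MonotoneOn φ (Set.Ici 0) ∧
    φ 0 = 0 ∧ (∀ u : ℝ, 0 < u → 0 < φ u) ∧ Filter.Tendsto φ Filter.atTop Filter.atTop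

/-- The numerical radius of a bounded operator on a complex Hilbert space. -/
noncomputable def numRad {H : Type*} [NormedAddCommGroup H] [InnerProductSpace ℂ H]
    (A : H →L[ℂ] H) : ℝ :=
  ⨆ x : {x : H // ‖x‖ = 1}, ‖(inner ℂ (A x.1) x.1 : ℂ)‖

/-- The modulus `|A| = (A*A)^{1/2}`, via continuous functional calculus. -/
noncomputable def absOp {H : Type*} [NormedAddCommGroup H] [InnerProductSpace ℂ H]
    [CompleteSpace H] (A : H →L[ℂ] H) : H →L[ℂ] H :=
  cfc Real.sqrt (ContinuousLinearMap.adjoint A * A)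

variable {H : Type*} [NormedAddCommGroup H] [InnerProductSpace ℂ H] [CompleteSpace H]

/-!
For a unit vector `x`, the mixed Schwarz inequality, Buzano's inequality and the AM–GM inequality
give
`|⟪A x, x⟫|² ≤ ⟪|A| x, x⟫ ⟪|A*| x, x⟫ ≤ (‖|A| x‖ ‖|A*| x‖ + |⟪|A| x, |A*| x⟫|) / 2
  ≤ (⟪|A|² x, x⟫ + ⟪|A*|² x, x⟫) / 4 + w(|A| |A*|) / 2`.
Applying the monotone convex function `φ`, then convexity, and then Jensen's inequality
`φ(⟪T x, x⟫) ≤ ⟪φ(T) x, x⟫` for positive `T` (obtained from a supporting line of `φ`) bounds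
`φ(|⟪A x, x⟫|²)` by the right-hand side; taking the supremum over `x` finishes the proof.

The mixed Schwarz inequality `|⟪A x, y⟫|² ≤ ⟪|A| x, x⟫ ⟪|A*| y, y⟫` is proved without polar
decomposition: for `δ > 0` the operator `(A*A + δ²)^{1/4}` is invertible, which factors `A`, and
the intertwining `A f(A*A) = f(AA*) A` lets one let `δ → 0`.
-/

open Set RCLike ContinuousLinearMap
open scoped InnerProductSpace

section InnerProduct

variable {𝕜 E : Type*} [RCLike 𝕜] [NormedAddCommGroup E] [InnerProductSpace 𝕜 E]

-- `u ↦ 2⟪x, u⟫x - u` is the reflection in the line spanned by `x`.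
lemma norm_two_smul_inner_smul_sub {x : E} (hx : ‖x‖ = 1) (u : E) :
    ‖(2 : 𝕜) • (⟪x, u⟫_𝕜 • x) - u‖ = ‖u‖ := by
  have hinner : ⟪(2 : 𝕜) • (⟪x, u⟫_𝕜 • x), u⟫_𝕜 = ((2 * ‖⟪x, u⟫_𝕜‖ ^ 2 : ℝ) : 𝕜) := by
    rw [inner_smul_left, inner_smul_left, ← inner_conj_symm x u, RCLike.conj_mul]
    simp [map_ofNat]
  have hnorm : ‖(2 : 𝕜) • (⟪x, u⟫_𝕜 • x)‖ = 2 * ‖⟪x, u⟫_𝕜‖ := by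
    rw [norm_smul, norm_smul, hx, RCLike.norm_two, mul_one]
  refine (sq_eq_sq₀ (norm_nonneg _) (norm_nonneg _)).mp ?_
  rw [norm_sub_sq (𝕜 := 𝕜), hinner, hnorm, RCLike.ofReal_re]
  ring

theorem norm_inner_mul_inner_le {x : E} (hx : ‖x‖ = 1) (u v : E) :
    ‖⟪u, x⟫_𝕜 * ⟪x, v⟫_𝕜‖ ≤ (‖u‖ * ‖v‖ + ‖⟪u, v⟫_𝕜‖) / 2 := by
  have hreflect : ⟪(2 : 𝕜) • (⟪x, u⟫_𝕜 • x) - u, v⟫_𝕜 =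
      2 * (⟪u, x⟫_𝕜 * ⟪x, v⟫_𝕜) - ⟪u, v⟫_𝕜 := by
    simp [inner_sub_left, inner_smul_left, inner_conj_symm, map_ofNat]
  have hle : ‖2 * (⟪u, x⟫_𝕜 * ⟪x, v⟫_𝕜) - ⟪u, v⟫_𝕜‖ ≤ ‖u‖ * ‖v‖ := by
    rw [← hreflect, ← norm_two_smul_inner_smul_sub (𝕜 := 𝕜) hx u]
    exact norm_inner_le_norm _ _
  have := norm_sub_norm_le (2 * (⟪u, x⟫_𝕜 * ⟪x, v⟫_𝕜)) ⟪u, v⟫_𝕜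
  rw [norm_mul, RCLike.norm_two] at this
  linarith

lemma ContinuousLinearMap.re_inner_nonneg_of_nonneg {T : E →L[𝕜] E} (hT : 0 ≤ T) (x : E) :
    0 ≤ re ⟪T x, x⟫_𝕜 :=
  ((nonneg_iff_isPositive T).mp hT).re_inner_nonneg_left x

lemma ContinuousLinearMap.re_inner_le_re_inner_of_le {S T : E →L[𝕜] E} (h : S ≤ T) (x : E) :
    re ⟪S x, x⟫_𝕜 ≤ re ⟪T x, x⟫_𝕜 := by
  have := h.re_inner_nonneg_left x
  rwa [sub_apply, inner_sub_left, map_sub, sub_nonneg] at this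

end InnerProduct

section Convex

variable {f : ℝ → ℝ}

lemma ConvexOn.add_rightDeriv_mul_sub_le {S : Set ℝ} (hf : ConvexOn ℝ S f) {x y : ℝ}
    (hx : x ∈ interior S) (hy : y ∈ S) :
    f x + derivWithin f (Ioi x) x * (y - x) ≤ f y := by
  rcases lt_trichotomy x y with hxy | rfl | hyx
  · have := hf.rightDeriv_le_slope_of_mem_interior hx hy hxy
    rw [slope_def_field, le_div_iff₀ (sub_pos.mpr hxy)] at this
    linarith
  · simp
  · have := (hf.slope_le_leftDeriv_of_mem_interior hy hx hyx).trans
      (hf.leftDeriv_le_rightDeriv_of_mem_interior hx)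
    rw [slope_def_field, div_le_iff₀ (sub_pos.mpr hyx)] at this
    linarith

lemma ConvexOn.exists_affine_le_of_monotoneOn (hconv : ConvexOn ℝ (Ici 0) f)
    (hmono : MonotoneOn f (Ici 0)) {s : ℝ} (hs : 0 ≤ s) :
    ∃ a : ℝ, ∀ t ∈ Ici (0 : ℝ), f s + a * (t - s) ≤ f t := by
  rcases hs.eq_or_lt with rfl | hs
  · exact ⟨0, fun t ht => by simpa using hmono self_mem_Ici ht ht⟩
  · exact ⟨_, fun t ht => hconv.add_rightDeriv_mul_sub_le (by simpa using hs) ht⟩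

lemma ConvexOn.map_add_div_two_le {S : Set ℝ} (hf : ConvexOn ℝ S f) {a b : ℝ} (ha : a ∈ S)
    (hb : b ∈ S) : f ((a + b) / 2) ≤ (f a + f b) / 2 := by
  have := hf.2 ha hb (by norm_num : (0 : ℝ) ≤ 1 / 2) (by norm_num : (0 : ℝ) ≤ 1 / 2) (by norm_num)
  simp only [smul_eq_mul] at this
  calc f ((a + b) / 2) = f (1 / 2 * a + 1 / 2 * b) := by congr 1; ring
    _ ≤ 1 / 2 * f a + 1 / 2 * f b := this
    _ = (f a + f b) / 2 := by ring

lemma ConvexOn.map_add_div_four_add_div_two_le {S : Set ℝ} (hf : ConvexOn ℝ S f) {a b c : ℝ}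
    (ha : a ∈ S) (hb : b ∈ S) (hc : c ∈ S) :
    f ((a + b) / 4 + c / 2) ≤ (f a + f b) / 4 + f c / 2 := by
  have hab : (a + b) / 2 ∈ S := by
    convert hf.1 ha hb (by norm_num : (0 : ℝ) ≤ 1 / 2) (by norm_num : (0 : ℝ) ≤ 1 / 2)
      (by norm_num) using 1
    simp only [smul_eq_mul]; ring
  calc f ((a + b) / 4 + c / 2) = f (((a + b) / 2 + c) / 2) := by congr 1; ring
    _ ≤ (f ((a + b) / 2) + f c) / 2 := hf.map_add_div_two_le hab hc
    _ ≤ ((f a + f b) / 2 + f c) / 2 := by gcongr; exact hf.map_add_div_two_le ha hb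
    _ = (f a + f b) / 4 + f c / 2 := by ring

end Convex

section Intertwining

variable {A : Type*} [Ring A] [StarRing A] [Algebra ℝ A] [TopologicalSpace A]
  [ContinuousFunctionalCalculus ℝ A IsSelfAdjoint] [IsTopologicalRing A] [T2Space A]

theorem SemiconjBy.cfc_real {a b x : A} (h : SemiconjBy x a b) (ha : IsSelfAdjoint a)
    (hb : IsSelfAdjoint b) (f : ℝ → ℝ) (hfa : ContinuousOn f (spectrum ℝ a))
    (hfb : ContinuousOn f (spectrum ℝ b)) :
    SemiconjBy x (cfc f a) (cfc f b) := by
  set s := spectrum ℝ a ∪ spectrum ℝ b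
  have hsa := ContinuousFunctionalCalculus.isCompact_spectrum (R := ℝ) a
  have hsb := ContinuousFunctionalCalculus.isCompact_spectrum (R := ℝ) b
  have : CompactSpace s := isCompact_iff_compactSpace.mp (hsa.union hsb)
  have hcfcHom (g : C(s, ℝ)) : SemiconjBy x (cfcHomSuperset ha subset_union_left g)
      (cfcHomSuperset hb subset_union_right g) := by
    induction g using ContinuousMap.induction_on_of_compact with
    | const r =>
      have : ContinuousMap.const s r = algebraMap ℝ C(s, ℝ) r := rfl
      rw [this, AlgHomClass.commutes, AlgHomClass.commutes]
      exact Algebra.commute_algebraMap_right r x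
    | id => rwa [cfcHomSuperset_id, cfcHomSuperset_id]
    | star_id => rwa [star_trivial, cfcHomSuperset_id, cfcHomSuperset_id]
    | add f g hf hg => simpa only [map_add] using hf.add_right hg
    | mul f g hf hg => simpa only [map_mul] using hf.mul_right hg
    | frequently f hf =>
      exact hf.mem_of_closed (isClosed_eq
        (continuous_const.mul (cfcHomSuperset_continuous ha _))
        ((cfcHomSuperset_continuous hb _).mul continuous_const))
  have hf : ContinuousOn f s := hfa.union_of_isClosed hfb hsa.isClosed hsb.isClosed
  convert hcfcHom ⟨s.domRestrict f, hf.domRestrict⟩ using 1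
  · rw [cfcHomSuperset_apply, cfc_apply f a]; rfl
  · rw [cfcHomSuperset_apply, cfc_apply f b]; rfl

end Intertwining

theorem ConvexOn.map_re_inner_le_re_inner_cfc {φ : ℝ → ℝ} (hconv : ConvexOn ℝ (Ici 0) φ)
    (hcont : ContinuousOn φ (Ici 0)) (hmono : MonotoneOn φ (Ici 0)) {T : H →L[ℂ] H} (hT : 0 ≤ T)
    {x : H} (hx : ‖x‖ = 1) :
    φ (re ⟪T x, x⟫_ℂ) ≤ re ⟪cfc φ T x, x⟫_ℂ := by
  have hspec : spectrum ℝ T ⊆ Ici 0 := fun t ht => spectrum_nonneg_of_nonneg hT ht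
  set s := re ⟪T x, x⟫_ℂ
  obtain ⟨a, ha⟩ := hconv.exists_affine_le_of_monotoneOn hmono (re_inner_nonneg_of_nonneg hT x)
  have hle : algebraMap ℝ _ (φ s - a * s) + a • T ≤ cfc φ T := by
    calc algebraMap ℝ _ (φ s - a * s) + a • T = cfc (fun t => (φ s - a * s) + a * t) T := by
          rw [cfc_const_add _ _ T, cfc_const_mul_id a T]
      _ ≤ cfc φ T := cfc_mono (fun t ht => by linarith [ha t (hspec ht)]) (by fun_prop)
          (hcont.mono hspec)
  have := re_inner_le_re_inner_of_le hle x
  simp [Algebra.algebraMap_eq_smul_one, inner_add_left, inner_smul_left_eq_smul, hx] at this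
  change φ s - a * s + a * s ≤ re ⟪cfc φ T x, x⟫_ℂ at this
  linarith

section Modulus

lemma IsSelfAdjoint.norm_apply_sq {S : H →L[ℂ] H} (hS : IsSelfAdjoint S) (x : H) :
    ‖S x‖ ^ 2 = re ⟪(S * S) x, x⟫_ℂ := by
  rw [apply_norm_sq_eq_inner_adjoint_left, hS.adjoint_eq]
  rfl

lemma norm_cfc_apply_sq (T : H →L[ℂ] H) {f : ℝ → ℝ} (hf : ContinuousOn f (spectrum ℝ T))
    (x : H) : ‖cfc f T x‖ ^ 2 = re ⟪cfc (fun t => f t ^ 2) T x, x⟫_ℂ := by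
  rw [(cfc_predicate f T).norm_apply_sq, ← cfc_mul f f T hf hf]
  simp only [sq]

lemma adjoint_mul_self_nonneg (A : H →L[ℂ] H) : 0 ≤ adjoint A * A := by
  simpa [star_eq_adjoint] using star_mul_self_nonneg A

lemma mul_adjoint_self_nonneg (A : H →L[ℂ] H) : 0 ≤ A * adjoint A := by
  simpa [star_eq_adjoint] using mul_star_self_nonneg A

lemma semiconjBy_adjoint_mul_self (A : H →L[ℂ] H) :
    SemiconjBy A (adjoint A * A) (A * adjoint A) :=
  (mul_assoc _ _ _).symm

lemma norm_cfc_apply_adjoint_sq (A : H →L[ℂ] H) {f : ℝ → ℝ} (hf : ContinuousOn f (Ici 0))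
    (y : H) :
    ‖cfc f (adjoint A * A) (adjoint A y)‖ ^ 2 =
      re ⟪cfc (fun t => f t ^ 2 * t) (A * adjoint A) y, y⟫_ℂ := by
  have hD := adjoint_mul_self_nonneg A
  have hAA := mul_adjoint_self_nonneg A
  have hspec : spectrum ℝ (adjoint A * A) ⊆ Ici 0 := fun t ht => spectrum_nonneg_of_nonneg hD ht
  have hspec' : spectrum ℝ (A * adjoint A) ⊆ Ici 0 := fun t ht => spectrum_nonneg_of_nonneg hAA ht
  set F := cfc f (adjoint A * A)
  have hF_sa : IsSelfAdjoint F := cfc_predicate _ _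
  have hf2 : ContinuousOn (fun t => f t ^ 2) (Ici 0) := hf.pow 2
  have hF : adjoint (F * adjoint A) * (F * adjoint A) =
      cfc (fun t => f t ^ 2 * t) (A * adjoint A) :=
    calc adjoint (F * adjoint A) * (F * adjoint A) = A * (F * F) * adjoint A := by
          simp only [← star_eq_adjoint, star_mul, star_star, hF_sa.star_eq]
          noncomm_ring
      _ = A * cfc (fun t => f t ^ 2) (adjoint A * A) * adjoint A := by
          simp only [F, sq, cfc_mul f f _ (hf.mono hspec) (hf.mono hspec)]
      _ = cfc (fun t => f t ^ 2) (A * adjoint A) * (A * adjoint A) := by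
          rw [(semiconjBy_adjoint_mul_self A).cfc_real hD.isSelfAdjoint hAA.isSelfAdjoint _
            (hf2.mono hspec) (hf2.mono hspec'), mul_assoc]
      _ = _ := by
          rw [cfc_mul (fun t => f t ^ 2) (fun t : ℝ => t) _ (hf2.mono hspec') continuousOn_id,
            cfc_id' ℝ (A * adjoint A) hAA.isSelfAdjoint]
  rw [← mul_apply_eq_comp, apply_norm_sq_eq_inner_adjoint_left]
  exact congrArg (fun T : H →L[ℂ] H => re ⟪T y, y⟫_ℂ) hF

lemma absOp_nonneg (A : H →L[ℂ] H) : 0 ≤ absOp A :=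
  cfc_nonneg fun t _ => Real.sqrt_nonneg t

lemma absOp_adjoint (A : H →L[ℂ] H) : absOp (adjoint A) = cfc Real.sqrt (A * adjoint A) := by
  rw [absOp, adjoint_adjoint]

lemma norm_absOp_apply_sq (A : H →L[ℂ] H) (x : H) :
    ‖absOp A x‖ ^ 2 = re ⟪(adjoint A * A) x, x⟫_ℂ := by
  have hD := adjoint_mul_self_nonneg A
  rw [absOp, norm_cfc_apply_sq _ Real.continuous_sqrt.continuousOn,
    cfc_congr fun t ht => Real.sq_sqrt (spectrum_nonneg_of_nonneg hD ht),
    cfc_id' ℝ _ hD.isSelfAdjoint]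

-- `A = (A q(A*A)⁻¹) q(A*A)` with `q(t) = (t + δ²)^{1/4}`, followed by Cauchy–Schwarz.
lemma norm_inner_sq_le_re_inner_cfc_sqrt_add_sq (A : H →L[ℂ] H) (x y : H) {δ : ℝ} (hδ : 0 < δ) :
    ‖⟪A x, y⟫_ℂ‖ ^ 2 ≤ re ⟪cfc (fun t => √(t + δ ^ 2)) (adjoint A * A) x, x⟫_ℂ *
      re ⟪cfc (fun t => t / √(t + δ ^ 2)) (A * adjoint A) y, y⟫_ℂ := by
  set D := adjoint A * A
  have hD : 0 ≤ D := adjoint_mul_self_nonneg A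
  have hspec : spectrum ℝ D ⊆ Ici 0 := fun t ht => spectrum_nonneg_of_nonneg hD ht
  set q : ℝ → ℝ := fun t => √√(t + δ ^ 2)
  have hq_pos : ∀ t ∈ Ici (0 : ℝ), 0 < q t := fun t ht =>
    Real.sqrt_pos.mpr (Real.sqrt_pos.mpr (add_pos_of_nonneg_of_pos ht (by positivity)))
  have hq : ContinuousOn q (Ici 0) := by fun_prop
  have hq_inv : ContinuousOn (fun t => (q t)⁻¹) (Ici 0) := hq.inv₀ fun t ht => (hq_pos t ht).ne'
  set P := cfc q D
  set Q := cfc (fun t => (q t)⁻¹) D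
  have hQP : Q * P = 1 := by
    rw [← cfc_mul _ _ D (hq_inv.mono hspec) (hq.mono hspec), ← cfc_one ℝ D hD.isSelfAdjoint]
    exact cfc_congr fun t ht => inv_mul_cancel₀ (hq_pos t (hspec ht)).ne'
  have hfactor : ⟪A x, y⟫_ℂ = ⟪P x, Q (adjoint A y)⟫_ℂ :=
    calc ⟪A x, y⟫_ℂ = ⟪A (Q (P x)), y⟫_ℂ := by
          rw [← mul_apply_eq_comp Q P, hQP, one_apply_eq_self]
      _ = ⟪Q (P x), adjoint A y⟫_ℂ := (adjoint_inner_right _ _ _).symm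
      _ = ⟪P x, Q (adjoint A y)⟫_ℂ := (cfc_predicate _ D : IsSelfAdjoint Q).isSymmetric _ _
  have hP : ‖P x‖ ^ 2 = re ⟪cfc (fun t => √(t + δ ^ 2)) D x, x⟫_ℂ := by
    rw [norm_cfc_apply_sq D (hq.mono hspec)]
    congr 3
    exact cfc_congr fun t _ => Real.sq_sqrt (Real.sqrt_nonneg _)
  have hQ : ‖Q (adjoint A y)‖ ^ 2 =
      re ⟪cfc (fun t => t / √(t + δ ^ 2)) (A * adjoint A) y, y⟫_ℂ := by
    rw [norm_cfc_apply_adjoint_sq A hq_inv]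
    congr 3
    refine cfc_congr fun t _ => ?_
    rw [inv_pow, Real.sq_sqrt (Real.sqrt_nonneg _), inv_mul_eq_div]
  calc ‖⟪A x, y⟫_ℂ‖ ^ 2 ≤ (‖P x‖ * ‖Q (adjoint A y)‖) ^ 2 := by
        rw [hfactor]; gcongr; exact norm_inner_le_norm _ _
    _ = _ := by rw [mul_pow, hP, hQ]

lemma re_inner_cfc_sqrt_add_sq_le {T : H →L[ℂ] H} (hT : 0 ≤ T) {δ : ℝ} (hδ : 0 ≤ δ) (x : H) :
    re ⟪cfc (fun t => √(t + δ ^ 2)) T x, x⟫_ℂ ≤ re ⟪cfc Real.sqrt T x, x⟫_ℂ + δ * ‖x‖ ^ 2 := by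
  have hle : cfc (fun t => √(t + δ ^ 2)) T ≤ cfc Real.sqrt T + algebraMap ℝ _ δ := by
    rw [← cfc_add_const δ Real.sqrt T]
    refine cfc_mono fun t ht => ?_
    have ht0 : 0 ≤ t := spectrum_nonneg_of_nonneg hT ht
    rw [Real.sqrt_le_iff]
    exact ⟨by positivity, by nlinarith [Real.sq_sqrt ht0, Real.sqrt_nonneg t]⟩
  simpa [inner_add_left, Algebra.algebraMap_eq_smul_one, inner_smul_left_eq_smul,
    ← Complex.ofReal_pow] using re_inner_le_re_inner_of_le hle x

lemma re_inner_cfc_div_sqrt_add_sq_le {T : H →L[ℂ] H} (hT : 0 ≤ T) {δ : ℝ} (hδ : 0 < δ)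
    (x : H) :
    re ⟪cfc (fun t => t / √(t + δ ^ 2)) T x, x⟫_ℂ ≤ re ⟪cfc Real.sqrt T x, x⟫_ℂ := by
  have hspec : spectrum ℝ T ⊆ Ici 0 := fun t ht => spectrum_nonneg_of_nonneg hT ht
  have hcont : ContinuousOn (fun t => t / √(t + δ ^ 2)) (Ici 0) :=
    continuousOn_id.div (by fun_prop) fun t ht =>
      (Real.sqrt_pos.mpr (add_pos_of_nonneg_of_pos ht (by positivity))).ne'
  refine re_inner_le_re_inner_of_le (cfc_mono (fun t ht => ?_) (hcont.mono hspec)) x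
  have ht0 : 0 ≤ t := hspec ht
  rw [div_le_iff₀ (Real.sqrt_pos.mpr (by positivity))]
  calc t = √t * √t := (Real.mul_self_sqrt ht0).symm
    _ ≤ √t * √(t + δ ^ 2) := by gcongr; linarith [sq_nonneg δ]

theorem norm_inner_sq_le_re_inner_absOp (A : H →L[ℂ] H) (x y : H) :
    ‖⟪A x, y⟫_ℂ‖ ^ 2 ≤ re ⟪absOp A x, x⟫_ℂ * re ⟪absOp (adjoint A) y, y⟫_ℂ := by
  have hAA := mul_adjoint_self_nonneg A
  have hbound : ∀ δ > 0, ‖⟪A x, y⟫_ℂ‖ ^ 2 ≤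
      (re ⟪absOp A x, x⟫_ℂ + δ * ‖x‖ ^ 2) * re ⟪absOp (adjoint A) y, y⟫_ℂ := by
    intro δ hδ
    have hnonneg : 0 ≤ cfc (fun t => t / √(t + δ ^ 2)) (A * adjoint A) :=
      cfc_nonneg fun t ht => div_nonneg (spectrum_nonneg_of_nonneg hAA ht) (Real.sqrt_nonneg _)
    refine (norm_inner_sq_le_re_inner_cfc_sqrt_add_sq A x y hδ).trans (mul_le_mul
      (re_inner_cfc_sqrt_add_sq_le (adjoint_mul_self_nonneg A) hδ.le x) ?_
      (re_inner_nonneg_of_nonneg hnonneg y) ?_)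
    · rw [absOp_adjoint]
      exact re_inner_cfc_div_sqrt_add_sq_le hAA hδ y
    · have := re_inner_nonneg_of_nonneg (absOp_nonneg A) x
      positivity
  have hlim : Filter.Tendsto (fun δ => (re ⟪absOp A x, x⟫_ℂ + δ * ‖x‖ ^ 2) *
      re ⟪absOp (adjoint A) y, y⟫_ℂ) (nhdsWithin 0 (Ioi 0))
      (nhds (re ⟪absOp A x, x⟫_ℂ * re ⟪absOp (adjoint A) y, y⟫_ℂ)) := by
    refine Filter.Tendsto.mono_left ?_ nhdsWithin_le_nhds
    exact ((continuous_const.add (continuous_id.mul continuous_const)).mul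
      continuous_const).tendsto' 0 _ (by simp)
  exact ge_of_tendsto hlim (eventually_nhdsWithin_of_forall hbound)

end Modulus

section NumericalRadius

variable {E : Type*} [NormedAddCommGroup E] [InnerProductSpace ℂ E]

lemma bddAbove_range_norm_inner_self (A : E →L[ℂ] E) :
    BddAbove (range fun x : {x : E // ‖x‖ = 1} => ‖⟪A x.1, x.1⟫_ℂ‖) := by
  refine ⟨‖A‖, ?_⟩
  rintro _ ⟨x, rfl⟩
  calc ‖⟪A x.1, x.1⟫_ℂ‖ ≤ ‖A x.1‖ * ‖x.1‖ := norm_inner_le_norm _ _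
    _ ≤ ‖A‖ := by rw [x.2, mul_one]; exact A.unit_le_opNorm _ x.2.le

lemma norm_inner_self_le_numRad (A : E →L[ℂ] E) {x : E} (hx : ‖x‖ = 1) :
    ‖⟪A x, x⟫_ℂ‖ ≤ numRad A :=
  le_ciSup (bddAbove_range_norm_inner_self A) (⟨x, hx⟩ : {x : E // ‖x‖ = 1})

lemma numRad_nonneg (A : E →L[ℂ] E) : 0 ≤ numRad A :=
  Real.iSup_nonneg fun _ => norm_nonneg _

lemma apply_numRad_le (A : E →L[ℂ] E) {g : ℝ → ℝ} (hg : ContinuousOn g (Ici 0)) {C : ℝ}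
    (h0 : g 0 ≤ C) (h : ∀ x : E, ‖x‖ = 1 → g ‖⟪A x, x⟫_ℂ‖ ≤ C) : g (numRad A) ≤ C := by
  rcases isEmpty_or_nonempty {x : E // ‖x‖ = 1} with hE | hE
  · rwa [numRad, Real.iSup_of_isEmpty]
  set R := range fun x : {x : E // ‖x‖ = 1} => ‖⟪A x.1, x.1⟫_ℂ‖
  have hmem : numRad A ∈ closure R :=
    csSup_mem_closure (range_nonempty _) (bddAbove_range_norm_inner_self A)
  have hR : R ⊆ Ici 0 := range_subset_iff.mpr fun _ => norm_nonneg _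
  refine closure_minimal ?_ isClosed_Iic
    (((hg _ (numRad_nonneg A)).mono hR).mem_closure_image hmem)
  rintro _ ⟨_, ⟨x, rfl⟩, rfl⟩
  exact h x.1 x.2

end NumericalRadius

lemma norm_inner_self_sq_le (A : H →L[ℂ] H) {x : H} (hx : ‖x‖ = 1) :
    ‖⟪A x, x⟫_ℂ‖ ^ 2 ≤ (re ⟪(adjoint A * A) x, x⟫_ℂ + re ⟪(A * adjoint A) x, x⟫_ℂ) / 4 +
      numRad (absOp A * absOp (adjoint A)) / 2 := by
  set u := absOp A x
  set v := absOp (adjoint A) x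
  have hv : 0 ≤ re ⟪v, x⟫_ℂ := re_inner_nonneg_of_nonneg (absOp_nonneg _) x
  have hu2 : ‖u‖ ^ 2 = re ⟪(adjoint A * A) x, x⟫_ℂ := norm_absOp_apply_sq A x
  have hv2 : ‖v‖ ^ 2 = re ⟪(A * adjoint A) x, x⟫_ℂ := by
    rw [norm_absOp_apply_sq, adjoint_adjoint]
  have huv : ‖⟪u, v⟫_ℂ‖ ≤ numRad (absOp A * absOp (adjoint A)) := by
    have : ⟪u, v⟫_ℂ = ⟪x, (absOp A * absOp (adjoint A)) x⟫_ℂ :=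
      (absOp_nonneg A).isSelfAdjoint.isSymmetric x v
    rw [this, norm_inner_symm]
    exact norm_inner_self_le_numRad _ hx
  calc ‖⟪A x, x⟫_ℂ‖ ^ 2 ≤ re ⟪u, x⟫_ℂ * re ⟪v, x⟫_ℂ := norm_inner_sq_le_re_inner_absOp A x x
    _ ≤ ‖⟪u, x⟫_ℂ * ⟪x, v⟫_ℂ‖ := by
      rw [norm_mul, norm_inner_symm x v]
      exact mul_le_mul (re_le_norm _) (re_le_norm _) hv (norm_nonneg _)
    _ ≤ (‖u‖ * ‖v‖ + ‖⟪u, v⟫_ℂ‖) / 2 := norm_inner_mul_inner_le hx u v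
    _ ≤ ((‖u‖ ^ 2 + ‖v‖ ^ 2) / 2 + numRad (absOp A * absOp (adjoint A))) / 2 := by
      gcongr; nlinarith [sq_nonneg (‖u‖ - ‖v‖)]
    _ = _ := by rw [hu2, hv2]; ring

theorem stmt19 (A : H →L[ℂ] H) (φ : ℝ → ℝ) (hφ : IsOrliczFunction φ) :
    φ (numRad A ^ 2) ≤
      (1 / 4) * ‖cfc φ (ContinuousLinearMap.adjoint A * A) +
        cfc φ (A * ContinuousLinearMap.adjoint A)‖ +
      (1 / 2) * φ (numRad (absOp A * absOp (ContinuousLinearMap.adjoint A))) := by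
  obtain ⟨hconv, hcont, hmono, hφ0, -, -⟩ := hφ
  set w := numRad (absOp A * absOp (adjoint A))
  set S := cfc φ (adjoint A * A) + cfc φ (A * adjoint A)
  have hw : 0 ≤ w := numRad_nonneg _
  have hφw : 0 ≤ φ w := hφ0 ▸ hmono self_mem_Ici hw hw
  refine apply_numRad_le A (g := fun u => φ (u ^ 2))
    (hcont.comp (continuousOn_pow 2) fun u _ => sq_nonneg u) (by simp [hφ0]; positivity)
    fun x hx => ?_
  have hs₁ := re_inner_nonneg_of_nonneg (adjoint_mul_self_nonneg A) x
  have hs₂ := re_inner_nonneg_of_nonneg (mul_adjoint_self_nonneg A) x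
  have hj₁ := hconv.map_re_inner_le_re_inner_cfc hcont hmono (adjoint_mul_self_nonneg A) hx
  have hj₂ := hconv.map_re_inner_le_re_inner_cfc hcont hmono (mul_adjoint_self_nonneg A) hx
  have hS : re ⟪S x, x⟫_ℂ ≤ ‖S‖ :=
    (re_inner_le_norm _ _).trans (by rw [hx, mul_one]; exact S.unit_le_opNorm x hx.le)
  calc φ (‖⟪A x, x⟫_ℂ‖ ^ 2)
      ≤ φ ((re ⟪(adjoint A * A) x, x⟫_ℂ + re ⟪(A * adjoint A) x, x⟫_ℂ) / 4 + w / 2) :=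
        hmono (mem_Ici.mpr (sq_nonneg _)) (mem_Ici.mpr (by positivity)) (norm_inner_self_sq_le A hx)
    _ ≤ (φ (re ⟪(adjoint A * A) x, x⟫_ℂ) + φ (re ⟪(A * adjoint A) x, x⟫_ℂ)) / 4 + φ w / 2 :=
        hconv.map_add_div_four_add_div_two_le hs₁ hs₂ hw
    _ ≤ re ⟪S x, x⟫_ℂ / 4 + φ w / 2 := by
        rw [add_apply, inner_add_left, map_add]; linarith
    _ ≤ 1 / 4 * ‖S‖ + 1 / 2 * φ w := by linarith
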